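/- arXiv:1011.4884 — 2 statements merged into one kernel-verified Lean document; each statement's English description precedes it below -/
import Mathlib

section
/- For every mixed polynomial f : ℂⁿ → ℂ, the set f(Sing f) ∪ S(f) is a closed subset of ℂ. -/
open Complex Filter Finset

noncomputable section

abbrev MixedCoeff (n : ℕ) := ((Fin n → ℕ) × (Fin n → ℕ)) →₀ ℂ

namespace Mixed

variable {n : ℕ}

/-- Evaluation of a mixed polynomial given by its coefficient function `c`:
`f(z) = Σ c(ν,μ) zᵛ z̄ᵘ`. -/
def eval (c : MixedCoeff n) (z : Fin n → ℂ) : ℂ :=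
  c.sum fun p a => a * (∏ i, z i ^ p.1 i) * ∏ i, (starRingEnd ℂ) (z i) ^ p.2 i

/-- `∂f/∂z_i` evaluated at `(z, z̄)`. -/
def dz (c : MixedCoeff n) (i : Fin n) (z : Fin n → ℂ) : ℂ :=
  c.sum fun p a => a * (p.1 i) * (∏ j, z j ^ (p.1 j - if j = i then 1 else 0)) *
    ∏ j, (starRingEnd ℂ) (z j) ^ p.2 j

/-- `∂f/∂z̄_i` evaluated at `(z, z̄)`. -/
def dzbar (c : MixedCoeff n) (i : Fin n) (z : Fin n → ℂ) : ℂ :=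
  c.sum fun p a => a * (p.2 i) * (∏ j, z j ^ p.1 j) *
    ∏ j, (starRingEnd ℂ) (z j) ^ (p.2 j - if j = i then 1 else 0)

/-- The singular locus of `f` as a real map `ℝ²ⁿ → ℝ²`. -/
def Sing (c : MixedCoeff n) : Set (Fin n → ℂ) :=
  {z | ¬ Function.Surjective ⇑(fderiv ℝ (eval c) z)}

/-- The Milnor set `M(f)`. -/
def Milnor (c : MixedCoeff n) : Set (Fin n → ℂ) :=
  {z | ∃ (l : ℝ) (m : ℂ), m ≠ 0 ∧
    ∀ i, (l : ℂ) * z i = m * (starRingEnd ℂ) (dz c i z) + (starRingEnd ℂ) m * dzbar c i z}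

/-- The set `S(f)` of asymptotic ρ-nonregular values. -/
def Sset (c : MixedCoeff n) : Set ℂ :=
  {v | ∃ zk : ℕ → (Fin n → ℂ), (∀ k, zk k ∈ Milnor c) ∧
    Tendsto (fun k => ‖zk k‖) atTop atTop ∧
    Tendsto (fun k => eval c (zk k)) atTop (nhds v)}

/-- The point of `ℝⁿ` attached to the exponent pair `(ν,μ)`, namely `ν+μ`. -/
def suppPt (p : (Fin n → ℕ) × (Fin n → ℕ)) : Fin n → ℝ := fun i => ((p.1 i + p.2 i : ℕ) : ℝ)

/-- The support of `f`, as a subset of `ℝⁿ`. -/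
def suppPts (c : MixedCoeff n) : Set (Fin n → ℝ) := suppPt '' (c.support : Set _)

/-- The Newton polyhedron `Γ₀(f)`: convex hull of `{0} ∪ supp(f)`. -/
def Gamma0 (c : MixedCoeff n) : Set (Fin n → ℝ) := convexHull ℝ (insert 0 (suppPts c))

/-- `supp(f)‾`: the convex hull of `supp(f) \ {0}`. -/
def suppBar (c : MixedCoeff n) : Set (Fin n → ℝ) := convexHull ℝ (suppPts c \ {0})

/-- `F` is a face of the (compact convex) set `C`: either `C` itself or the set of
minimizers on `C` of a linear functional, and nonempty. -/
def IsFaceOf (C F : Set (Fin n → ℝ)) : Prop :=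
  F.Nonempty ∧ (F = C ∨ ∃ a : Fin n → ℝ,
    F = {x ∈ C | ∀ y ∈ C, ∑ i, a i * x i ≤ ∑ i, a i * y i})

/-- `Δ` is a face of the Newton boundary at infinity `Γ⁺(f)`: a face of `Γ₀(f)` not
containing the origin. -/
def IsGammaPlusFace (c : MixedCoeff n) (Δ : Set (Fin n → ℝ)) : Prop :=
  IsFaceOf (Gamma0 c) Δ ∧ (0 : Fin n → ℝ) ∉ Δ

/-- `Γ⁺(f)` as a subset of `ℝⁿ`: the union of the faces of `Γ₀(f)` not containing `0`. -/
def GammaPlusSet (c : MixedCoeff n) : Set (Fin n → ℝ) :=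
  {x | ∃ Δ, IsGammaPlusFace c Δ ∧ x ∈ Δ}

/-- The truncation `f_Δ` of `f` to a subset `Δ ⊆ ℝⁿ`. -/
def trunc (c : MixedCoeff n) (Δ : Set (Fin n → ℝ)) : MixedCoeff n :=
  @Finsupp.filter _ _ _ (fun p => suppPt p ∈ Δ) (Classical.decPred _) c

/-- Newton non-degeneracy: for every face `Δ` of `Γ⁺(f)`,
`Sing f_Δ ∩ f_Δ⁻¹(0) ∩ (ℂ*)ⁿ = ∅`. -/
def NewtonNonDeg (c : MixedCoeff n) : Prop :=
  ∀ Δ, IsGammaPlusFace c Δ → ∀ z : Fin n → ℂ, (∀ i, z i ≠ 0) →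
    eval (trunc c Δ) z = 0 → z ∉ Sing (trunc c Δ)

/-- Newton strong non-degeneracy: for every face `Δ` of `Γ⁺(f)`,
`Sing f_Δ ∩ (ℂ*)ⁿ = ∅`. -/
def NewtonStronglyNonDeg (c : MixedCoeff n) : Prop :=
  ∀ Δ, IsGammaPlusFace c Δ → ∀ z : Fin n → ℂ, (∀ i, z i ≠ 0) →
    z ∉ Sing (trunc c Δ)

/-- `Δ` is a bad face of `supp(f)‾`. -/
def IsBadFace (c : MixedCoeff n) (Δ : Set (Fin n → ℝ)) : Prop :=
  IsFaceOf (suppBar c) Δ ∧ (0 : Fin n → ℝ) ∈ affineSpan ℝ Δ ∧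
    ∃ a : Fin n → ℝ, (∃ i, a i < 0) ∧ (∃ j, 0 < a j) ∧
      {x ∈ suppBar c | ∑ i, a i * x i = 0} = Δ

/-- `f` depends effectively on all its variables. -/
def EffectiveAll (c : MixedCoeff n) : Prop :=
  ∀ i, ∃ p ∈ c.support, 0 < p.1 i + p.2 i

/-- The Euclidean norm on `ℂⁿ`. -/
def norm2 (v : Fin n → ℂ) : ℝ := Real.sqrt (∑ i, Complex.normSq (v i))

end Mixed

/-!
The real derivative of `f` at `z` is `v ↦ Σ (∂f/∂zᵢ) vᵢ + (∂f/∂z̄ᵢ) v̄ᵢ`. It fails to be onto `ℂ`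
exactly when some unit `μ` is real-orthogonal to its image, i.e. when
`μ · conj (df) + conj μ · ∂̄f = 0`. Hence `Sing f` is closed (the unit circle is compact) and lies
in `M(f)` (take `λ = 0`).

`S(f) = ⋂ₖ closure (f (M(f) ∩ {‖z‖ ≥ k}))` is closed. For closed `K ⊆ ℂⁿ`, splitting `K` into a
compact part `‖z‖ ≤ k` and the part `‖z‖ ≥ k` shows `closure (f K) ⊆ f K ∪ S_K(f)`, where
`S_K(f)` collects the limits of `f` along sequences in `K` tending to infinity. With
`K = Sing f ⊆ M(f)` this gives `f(Sing f) ∪ S(f) = closure (f (Sing f)) ∪ S(f)`.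
-/

open ComplexConjugate
open scoped InnerProductSpace Topology

theorem LinearMap.not_surjective_iff_exists_norm_eq_one_inner_eq_zero {E F : Type*}
    [AddCommGroup E] [Module ℝ E] [NormedAddCommGroup F] [InnerProductSpace ℝ F]
    [FiniteDimensional ℝ F] (L : E →ₗ[ℝ] F) :
    ¬ Function.Surjective L ↔ ∃ μ : F, ‖μ‖ = 1 ∧ ∀ v, ⟪μ, L v⟫_ℝ = 0 := by
  constructor
  · intro hL
    rw [← LinearMap.range_eq_top, ← Submodule.orthogonal_eq_bot_iff] at hL
    obtain ⟨μ, hμ, hμ0⟩ := (Submodule.ne_bot_iff _).mp hL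
    refine ⟨‖μ‖⁻¹ • μ, norm_smul_inv_norm hμ0, fun v => ?_⟩
    rw [real_inner_smul_left,
      (Submodule.mem_orthogonal' _ μ).mp hμ _ (LinearMap.mem_range_self L v), mul_zero]
  · rintro ⟨μ, hμ, hμL⟩ hL
    obtain ⟨v, rfl⟩ := hL μ
    have hv := hμL v
    rw [real_inner_self_eq_norm_sq, hμ] at hv
    norm_num at hv

lemma Complex.inner_mul_add_mul_conj (μ a b t : ℂ) :
    ⟪μ, a * t + b * conj t⟫_ℝ = ⟪t, μ * conj a + conj μ * b⟫_ℝ := by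
  simp only [Complex.inner, Complex.mul_re, Complex.add_re, Complex.conj_re, Complex.conj_im,
    Complex.mul_im, Complex.add_im]
  ring

lemma forall_sum_inner_eq_zero_iff {ι : Type*} [Fintype ι] [DecidableEq ι] (w : ι → ℂ) :
    (∀ v : ι → ℂ, ∑ i, ⟪v i, w i⟫_ℝ = 0) ↔ ∀ i, w i = 0 := by
  refine ⟨fun h i => ?_, fun hw v => by simp [hw]⟩
  have hi := h (Pi.single i (w i))
  rwa [Finset.sum_eq_single i (fun j _ hj => by simp [Pi.single_eq_of_ne hj]) (by simp),
    Pi.single_eq_same, inner_self_eq_zero] at hi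

lemma natCast_mul_prod_pow_sub_ite {R ι : Type*} [CommSemiring R] [Fintype ι] [DecidableEq ι]
    (z : ι → R) (ν : ι → ℕ) (i : ι) :
    (ν i : R) * ∏ j, z j ^ (ν j - if j = i then 1 else 0)
      = (∏ j ∈ univ.erase i, z j ^ ν j) * ((ν i : R) * z i ^ (ν i - 1)) := by
  rcases Nat.eq_zero_or_pos (ν i) with h | h
  · simp [h]
  · rw [← Finset.mul_prod_erase univ _ (mem_univ i), if_pos rfl,
      Finset.prod_congr rfl fun j hj => by rw [if_neg (Finset.ne_of_mem_erase hj), Nat.sub_zero]]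
    ring

lemma hasFDerivAt_prod_pow {𝕜 ι : Type*} [NontriviallyNormedField 𝕜] [Fintype ι]
    [DecidableEq ι] (ν : ι → ℕ) (z : ι → 𝕜) :
    HasFDerivAt (fun w : ι → 𝕜 => ∏ j, w j ^ ν j)
      (∑ i, ((ν i : 𝕜) * ∏ j, z j ^ (ν j - if j = i then 1 else 0)) •
        ContinuousLinearMap.proj (R := 𝕜) (φ := fun _ : ι => 𝕜) i) z := by
  refine (HasFDerivAt.finsetProd (u := univ) (g := fun i (w : ι → 𝕜) => w i ^ ν i)
    fun i _ => (hasFDerivAt_apply (𝕜 := 𝕜) i z).pow (ν i)).congr_fderiv ?_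
  simp only [natCast_mul_prod_pow_sub_ite, smul_smul, nsmul_eq_mul]

section AsymptoticValues

variable {X Y : Type*} [SeminormedAddCommGroup X] [PseudoMetricSpace Y]

def asymptoticValues (f : X → Y) (M : Set X) : Set Y :=
  {v | ∃ z : ℕ → X, (∀ k, z k ∈ M) ∧ Tendsto (fun k => ‖z k‖) atTop atTop ∧
    Tendsto (fun k => f (z k)) atTop (𝓝 v)}

lemma asymptoticValues_mono {f : X → Y} {M N : Set X} (h : M ⊆ N) :
    asymptoticValues f M ⊆ asymptoticValues f N :=
  fun _ ⟨z, hzM, hz, hfz⟩ => ⟨z, fun k => h (hzM k), hz, hfz⟩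

lemma asymptoticValues_eq_iInter_closure (f : X → Y) (M : Set X) :
    asymptoticValues f M = ⋂ k : ℕ, closure (f '' (M ∩ {x | (k : ℝ) ≤ ‖x‖})) := by
  ext v
  simp only [Set.mem_iInter]
  constructor
  · rintro ⟨z, hzM, hz, hfz⟩ k
    exact mem_closure_of_tendsto hfz
      ((hz.eventually_ge_atTop k).mono fun j hj => Set.mem_image_of_mem f ⟨hzM j, hj⟩)
  · intro hv
    have hclose : ∀ k : ℕ, ∃ x ∈ M ∩ {x | (k : ℝ) ≤ ‖x‖}, dist (f x) v < 1 / (k + 1) := by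
      intro k
      obtain ⟨_, ⟨x, hx, rfl⟩, hd⟩ := Metric.mem_closure_iff.mp (hv k) _ Nat.one_div_pos_of_nat
      exact ⟨x, hx, by rwa [dist_comm]⟩
    choose z hz hd using hclose
    refine ⟨z, fun k => (hz k).1,
      tendsto_atTop_mono (fun k => (hz k).2) tendsto_natCast_atTop_atTop, ?_⟩
    exact tendsto_iff_dist_tendsto_zero.mpr (squeeze_zero (fun _ => dist_nonneg)
      (fun k => (hd k).le) tendsto_one_div_add_atTop_nhds_zero_nat)

lemma isClosed_asymptoticValues (f : X → Y) (M : Set X) : IsClosed (asymptoticValues f M) := by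
  rw [asymptoticValues_eq_iInter_closure]
  exact isClosed_iInter fun _ => isClosed_closure

lemma closure_image_subset_union_asymptoticValues [ProperSpace X] [T2Space Y] {f : X → Y}
    (hf : Continuous f) {K : Set X} (hK : IsClosed K) :
    closure (f '' K) ⊆ f '' K ∪ asymptoticValues f K := by
  intro v hv
  rw [asymptoticValues_eq_iInter_closure]
  by_cases hfar : v ∈ ⋂ k : ℕ, closure (f '' (K ∩ {x | (k : ℝ) ≤ ‖x‖}))
  · exact Or.inr hfar
  obtain ⟨k, hk⟩ := by simpa only [Set.mem_iInter, not_forall] using hfar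
  have hsplit : K = K ∩ Metric.closedBall 0 k ∪ K ∩ {x | (k : ℝ) ≤ ‖x‖} := by
    rw [← Set.inter_union_distrib_left, eq_comm, Set.inter_eq_left]
    intro x _
    simpa using le_total ‖x‖ k
  have hnear : IsClosed (f '' (K ∩ Metric.closedBall 0 k)) :=
    ((isCompact_closedBall 0 (k : ℝ)).inter_left hK |>.image hf).isClosed
  rw [hsplit, Set.image_union, closure_union, hnear.closure_eq] at hv
  exact Or.inl (Set.image_mono Set.inter_subset_left (hv.resolve_right hk))

end AsymptoticValues

namespace Mixed

variable {n : ℕ}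

lemma eval_eq_sum (c : MixedCoeff n) (z : Fin n → ℂ) :
    eval c z = ∑ p ∈ c.support, c p * (∏ j, z j ^ p.1 j) * conj (∏ j, z j ^ p.2 j) := by
  simp [eval, Finsupp.sum]

lemma fderiv_eval_apply (c : MixedCoeff n) (z v : Fin n → ℂ) :
    fderiv ℝ (eval c) z v = ∑ i, (dz c i z * v i + dzbar c i z * conj (v i)) := by
  have hP := fun ν => (hasFDerivAt_prod_pow ν z).restrictScalars ℝ
  have h : HasFDerivAt (fun w => ∑ p ∈ c.support,
      c p * (∏ j, w j ^ p.1 j) * conj (∏ j, w j ^ p.2 j)) _ z :=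
    HasFDerivAt.fun_sum fun p _ => ((hP p.1).const_mul (c p)).mul (hP p.2).star
  rw [show eval c = _ from funext (eval_eq_sum c), h.fderiv]
  simp only [map_prod, map_pow, _root_.sum_apply, add_apply, smul_apply,
    ContinuousLinearMap.comp_apply, ContinuousLinearMap.coe_restrictScalars',
    ContinuousLinearMap.proj_apply, smul_eq_mul, map_sum, ContinuousLinearEquiv.coe_coe,
    starL'_apply, star_mul', star_natCast, star_prod, star_pow, RCLike.star_def, mul_sum, sum_mul,
    ← sum_add_distrib, dz, dzbar, Finsupp.sum]
  rw [Finset.sum_comm]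
  exact Finset.sum_congr rfl fun p _ => Finset.sum_congr rfl fun i _ => by ring

lemma continuous_eval (c : MixedCoeff n) : Continuous (eval c) := by
  unfold eval Finsupp.sum
  fun_prop

lemma continuous_dz (c : MixedCoeff n) (i : Fin n) : Continuous (dz c i) := by
  unfold dz Finsupp.sum
  fun_prop

lemma continuous_dzbar (c : MixedCoeff n) (i : Fin n) : Continuous (dzbar c i) := by
  unfold dzbar Finsupp.sum
  fun_prop

lemma mem_sing_iff (c : MixedCoeff n) (z : Fin n → ℂ) :
    z ∈ Sing c ↔ ∃ μ : ℂ, ‖μ‖ = 1 ∧ ∀ i, μ * conj (dz c i z) + conj μ * dzbar c i z = 0 := by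
  rw [Sing, Set.mem_ofPred_eq, ← ContinuousLinearMap.coe_coe,
    LinearMap.not_surjective_iff_exists_norm_eq_one_inner_eq_zero]
  simp only [ContinuousLinearMap.coe_coe, fderiv_eval_apply, inner_sum,
    Complex.inner_mul_add_mul_conj]
  exact exists_congr fun μ => and_congr_right fun _ => forall_sum_inner_eq_zero_iff _

lemma isClosed_sing (c : MixedCoeff n) : IsClosed (Sing c) := by
  have hSing : Sing c = Prod.fst '' {p : (Fin n → ℂ) × Metric.sphere (0 : ℂ) 1 |
      ∀ i, (p.2 : ℂ) * conj (dz c i p.1) + conj (p.2 : ℂ) * dzbar c i p.1 = 0} := by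
    ext z
    simp [mem_sing_iff]
  rw [hSing]
  refine isClosedMap_fst_of_compactSpace _ ?_
  simp only [Set.ofPred_forall]
  refine isClosed_iInter fun i => isClosed_eq ?_ continuous_const
  have := continuous_dz c i
  have := continuous_dzbar c i
  fun_prop

lemma sing_subset_milnor (c : MixedCoeff n) : Sing c ⊆ Milnor c := fun z hz => by
  obtain ⟨μ, hμ, h⟩ := (mem_sing_iff c z).mp hz
  exact ⟨0, μ, norm_ne_zero_iff.mp (hμ ▸ one_ne_zero), fun i => by simp [h i]⟩

lemma sset_eq_asymptoticValues (c : MixedCoeff n) :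
    Sset c = asymptoticValues (eval c) (Milnor c) := rfl

end Mixed

open Mixed

/-- `f(Sing f) ∪ S(f)` is closed. -/
theorem image_sing_union_Sset_isClosed {n : ℕ} (c : MixedCoeff n) :
    IsClosed (Mixed.eval c '' Mixed.Sing c ∪ Mixed.Sset c) := by
  have hclosure : closure (eval c '' Sing c) ⊆ eval c '' Sing c ∪ Sset c := by
    rw [sset_eq_asymptoticValues]
    exact (closure_image_subset_union_asymptoticValues (continuous_eval c) (isClosed_sing c)).trans
      (Set.union_subset_union_right _ (asymptoticValues_mono (sing_subset_milnor c)))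
  have hunion : eval c '' Sing c ∪ Sset c = closure (eval c '' Sing c) ∪ Sset c :=
    (Set.union_subset_union_left _ subset_closure).antisymm
      (Set.union_subset hclosure Set.subset_union_right)
  rw [hunion, sset_eq_asymptoticValues]
  exact isClosed_closure.union (isClosed_asymptoticValues _ _)
end
end

section
/- Let f : ℂⁿ → ℂ be a Newton non-degenerate mixed polynomial and let I ⊆ {1,…,n} be nonempty such that the restriction f^I of f to ℂ^I := {z ∈ ℂⁿ | z_j = 0 for all j ∉ I} is not identically zero. Then (1) f^I, viewed as a mixed polynomial in the variables z_i with i ∈ I, is Newton non-degenerate, and (2) Γ⁺(f^I) = Γ⁺(f) ∩ ℝ^I_{≥0}, where Γ⁺ denotes the union of the faces of Γ₀ not containing 0 and ℝ^I_{≥0} = {x ∈ ℝⁿ | x_j = 0 for j ∉ I and x_i ≥ 0 for all i}. -/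
open Complex Filter Finset

noncomputable section

/-- The coordinate subspace `ℂ^I = {z | z_j = 0 for j ∉ I}` as a real submodule of `ℂⁿ`. -/
def coordSubspace {n : ℕ} (I : Finset (Fin n)) : Submodule ℝ (Fin n → ℂ) :=
  Submodule.pi ((↑I)ᶜ : Set (Fin n)) (fun _ => (⊥ : Submodule ℝ ℂ))

/-!
Every point of `Γ₀(f^I)` lies in `ℝ^I`, and conversely a point of `Γ₀(f) ∩ ℝ^I` is a convex
combination of points of `{0} ∪ supp f` whose coordinates outside `I` vanish (these coordinates
are non-negative), so `Γ₀(f^I) = Γ₀(f) ∩ ℝ^I`. A face of `Γ₀(f^I)` cut out by `a` with negative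
minimum `m` is also a face of `Γ₀(f)`: add a large multiple of the indicator of the complement of
`I` to `a`, which does not change `a` on `ℝ^I` and pushes the value of every exponent outside
`ℝ^I` above `m`. Hence the truncations of `f^I` are truncations of `f`; they only involve the
variables `z_i`, `i ∈ I`, so the non-degeneracy of `f` at the point obtained by putting `1` in the
other coordinates gives the non-degeneracy of `f^I` on `ℂ^I`.
-/

section ConvexHull

variable {𝕜 E : Type*} [Field 𝕜] [LinearOrder 𝕜] [IsStrictOrderedRing 𝕜] [AddCommGroup E]
  [Module 𝕜 E]

theorem mem_convexHull_sep_eq_of_le {S : Set E} {ℓ : E →ₗ[𝕜] 𝕜} {m : 𝕜}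
    (hS : ∀ s ∈ S, m ≤ ℓ s) {x : E} (hx : x ∈ convexHull 𝕜 S) (hxm : ℓ x ≤ m) :
    x ∈ convexHull 𝕜 {s ∈ S | ℓ s = m} := by
  classical
  obtain ⟨ι, _, w, z, hw₀, hw₁, hz, rfl⟩ := mem_convexHull_iff_exists_fintype.mp hx
  have hterm : ∀ i ∈ Finset.univ, 0 ≤ w i * (ℓ (z i) - m) := fun i _ =>
    mul_nonneg (hw₀ i) (sub_nonneg.2 (hS _ (hz i)))
  have hsum : ∑ i, w i * (ℓ (z i) - m) = ℓ (∑ i, w i • z i) - m := by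
    simp [mul_sub, Finset.sum_sub_distrib, ← Finset.sum_mul, hw₁]
  have hlevel : ∀ i, w i ≠ 0 → ℓ (z i) = m := fun i hi => by
    have h := (Finset.sum_eq_zero_iff_of_nonneg hterm).1
      (le_antisymm (hsum ▸ sub_nonpos.2 hxm) (Finset.sum_nonneg hterm)) i (Finset.mem_univ i)
    exact sub_eq_zero.1 ((mul_eq_zero.1 h).resolve_left hi)
  rw [← Finset.centerMass_eq_of_sum_1 _ _ hw₁, ← Finset.centerMass_filter_ne_zero]
  refine Finset.centerMass_mem_convexHull _ (fun i _ => hw₀ i) ?_ fun i hi => ?_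
  · rw [Finset.sum_filter_ne_zero, hw₁]
    exact one_pos
  · exact ⟨hz i, hlevel i (Finset.mem_filter.1 hi).2⟩

end ConvexHull

section Minimizers

variable {α β : Type*}

def minimizers [Preorder β] (f : α → β) (C : Set α) : Set α := {x ∈ C | IsMinOn f C x}

variable {f g : α → β} {C D : Set α} {x : α}

theorem minimizers_congr [Preorder β] (h : ∀ x ∈ C, f x = g x) :
    minimizers f C = minimizers g C := by
  ext x
  simp only [minimizers, Set.mem_sep_iff, isMinOn_iff]
  exact and_congr_right fun hx => forall₂_congr fun y hy => by rw [h x hx, h y hy]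

theorem minimizers_subset_of_subset [Preorder β] (hDC : D ⊆ C) (hx : x ∈ D)
    (hxC : x ∈ minimizers f C) : minimizers f D ⊆ minimizers f C := fun _ ⟨hy, hyD⟩ =>
  ⟨hDC hy, fun _ hz => (hyD hx).trans (hxC.2 hz)⟩

theorem minimizers_eq_of_subset [Preorder β] (hDC : D ⊆ C) (hx : x ∈ D) (hxC : IsMinOn f C x)
    (hCD : minimizers f C ⊆ D) : minimizers f D = minimizers f C :=
  (minimizers_subset_of_subset hDC hx ⟨hDC hx, hxC⟩).antisymm fun _ hy =>
    ⟨hCD hy, hy.2.on_subset hDC⟩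

theorem IsMinOn.lt_of_notMem_minimizers [PartialOrder β] (hx : IsMinOn f C x) {z : α}
    (hz : z ∈ C) (hnz : z ∉ minimizers f C) : f x < f z :=
  (hx hz).lt_of_ne fun h => hnz ⟨hz, fun _ hy => h ▸ hx hy⟩

end Minimizers

theorem surjective_fderiv_of_surjective_fderiv_comp {𝕜 E F G : Type*}
    [NontriviallyNormedField 𝕜] [NormedAddCommGroup E] [NormedSpace 𝕜 E] [NormedAddCommGroup F]
    [NormedSpace 𝕜 F] [NormedAddCommGroup G] [NormedSpace 𝕜 G] {h : F → G} {π : E →L[𝕜] F}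
    {x : E} (hh : DifferentiableAt 𝕜 h (π x)) (hs : Function.Surjective (fderiv 𝕜 (h ∘ π) x)) :
    Function.Surjective (fderiv 𝕜 h (π x)) := by
  rw [fderiv_comp x hh π.differentiableAt, π.fderiv, ContinuousLinearMap.coe_comp] at hs
  exact hs.of_comp

section CoordinateSubspaces

variable {n : ℕ} {I : Finset (Fin n)}

def coordPlane (I : Finset (Fin n)) : Set (Fin n → ℝ) := {x | ∀ j ∉ I, x j = 0}

theorem convex_coordPlane (I : Finset (Fin n)) : Convex ℝ (coordPlane I) :=
  fun _ hx _ hy _ _ _ _ _ j hj => by simp [hx j hj, hy j hj]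

def complIndicator (I : Finset (Fin n)) : Fin n → ℝ := fun i => if i ∈ I then 0 else 1

theorem complIndicator_dotProduct (I : Finset (Fin n)) (x : Fin n → ℝ) :
    complIndicator I ⬝ᵥ x = ∑ j ∈ Iᶜ, x j := by
  simp [complIndicator, dotProduct, ite_mul, Finset.sum_ite, Finset.filter_not,
    Finset.compl_eq_univ_sdiff]

theorem complIndicator_dotProduct_of_mem {x : Fin n → ℝ} (hx : x ∈ coordPlane I) :
    complIndicator I ⬝ᵥ x = 0 := by
  rw [complIndicator_dotProduct]
  exact Finset.sum_eq_zero fun j hj => hx j (Finset.mem_compl.1 hj)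

theorem mem_coordPlane_iff_of_nonneg {x : Fin n → ℝ} (hx : 0 ≤ x) :
    x ∈ coordPlane I ↔ complIndicator I ⬝ᵥ x = 0 := by
  refine ⟨complIndicator_dotProduct_of_mem, fun h j hj => ?_⟩
  rw [complIndicator_dotProduct] at h
  exact (Finset.sum_eq_zero_iff_of_nonneg fun i _ => hx i).1 h j (Finset.mem_compl.2 hj)

theorem mem_coordSubspace {v : Fin n → ℂ} : v ∈ coordSubspace I ↔ ∀ j ∉ I, v j = 0 := by
  simp [coordSubspace, Submodule.mem_pi]

def coordProj (I : Finset (Fin n)) : (Fin n → ℂ) →L[ℝ] coordSubspace I :=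
  (ContinuousLinearMap.pi fun i => if i ∈ I then ContinuousLinearMap.proj i else 0).codRestrict
    _ fun v => mem_coordSubspace.2 fun j hj => by simp [hj]

theorem coordProj_apply (v : Fin n → ℂ) (i : Fin n) :
    (coordProj I v : Fin n → ℂ) i = if i ∈ I then v i else 0 := by
  by_cases hi : i ∈ I <;> simp [coordProj, hi]

end CoordinateSubspaces

namespace Mixed

variable {n : ℕ} {I : Finset (Fin n)} {c : MixedCoeff n}

/-- The coefficients of the restriction `f^I` of `f` to `ℂ^I`. -/
def restrict (I : Finset (Fin n)) (c : MixedCoeff n) : MixedCoeff n :=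
  @Finsupp.filter _ _ _ (fun p => ∀ j ∉ I, p.1 j = 0 ∧ p.2 j = 0) (Classical.decPred _) c

/-- Newton non-degeneracy of `c` viewed as a mixed polynomial in the variables `z_i`, `i ∈ I`. -/
def NewtonNonDegOn (I : Finset (Fin n)) (c : MixedCoeff n) : Prop :=
  ∀ Δ, IsGammaPlusFace c Δ → ∀ z : coordSubspace I, (∀ i ∈ I, (z : Fin n → ℂ) i ≠ 0) →
    eval (trunc c Δ) z = 0 →
    Function.Surjective ⇑(fderiv ℝ (fun w : coordSubspace I => eval (trunc c Δ) w) z)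

theorem suppPt_mem_coordPlane {p : (Fin n → ℕ) × (Fin n → ℕ)} :
    suppPt p ∈ coordPlane I ↔ ∀ j ∉ I, p.1 j = 0 ∧ p.2 j = 0 := by
  simp only [coordPlane, suppPt, Set.mem_ofPred_eq, Nat.cast_eq_zero, Nat.add_eq_zero_iff]

theorem one_le_suppPt_of_notMem_coordPlane {p : (Fin n → ℕ) × (Fin n → ℕ)}
    (hp : suppPt p ∉ coordPlane I) : ∃ j ∉ I, 1 ≤ suppPt p j := by
  simp only [coordPlane, Set.mem_ofPred_eq, not_forall] at hp
  obtain ⟨j, hj, hpj⟩ := hp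
  have hpj' : p.1 j + p.2 j ≠ 0 := fun h => hpj (by rw [suppPt, h, Nat.cast_zero])
  exact ⟨j, hj, Nat.one_le_cast.2 (Nat.one_le_iff_ne_zero.2 hpj')⟩

theorem suppPts_subset_Ici (c : MixedCoeff n) : suppPts c ⊆ Set.Ici 0 := by
  rintro _ ⟨p, -, rfl⟩ i
  exact Nat.cast_nonneg _

theorem mem_support_restrict {p : (Fin n → ℕ) × (Fin n → ℕ)} :
    p ∈ (restrict I c).support ↔ p ∈ c.support ∧ suppPt p ∈ coordPlane I := by
  rw [Finsupp.mem_support_iff, Finsupp.mem_support_iff, restrict, Finsupp.filter_apply,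
    suppPt_mem_coordPlane]
  split_ifs <;> tauto

theorem suppPts_restrict (I : Finset (Fin n)) (c : MixedCoeff n) :
    suppPts (restrict I c) = suppPts c ∩ coordPlane I := by
  ext x
  simp only [suppPts, Set.mem_image, Finset.mem_coe, mem_support_restrict, Set.mem_inter_iff]
  constructor
  · rintro ⟨p, ⟨hp, hpI⟩, rfl⟩
    exact ⟨⟨p, hp, rfl⟩, hpI⟩
  · rintro ⟨⟨p, hp, rfl⟩, hpI⟩
    exact ⟨p, ⟨hp, hpI⟩, rfl⟩

theorem suppPt_mem_of_mem_support_trunc {Δ : Set (Fin n → ℝ)} {p : (Fin n → ℕ) × (Fin n → ℕ)}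
    (hp : p ∈ (trunc c Δ).support) : suppPt p ∈ Δ := by
  rw [Finsupp.mem_support_iff, trunc, Finsupp.filter_apply] at hp
  by_contra h
  exact hp (if_neg h)

theorem trunc_restrict {Δ : Set (Fin n → ℝ)} (hΔ : Δ ⊆ coordPlane I) :
    trunc (restrict I c) Δ = trunc c Δ := by
  ext p
  simp only [trunc, restrict, Finsupp.filter_apply]
  by_cases h : suppPt p ∈ Δ
  · rw [if_pos h, if_pos h, if_pos (suppPt_mem_coordPlane.1 (hΔ h))]
  · rw [if_neg h, if_neg h]

theorem differentiable_eval (c : MixedCoeff n) : Differentiable ℝ (eval c) := by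
  have : Differentiable ℝ (starRingEnd ℂ) := Complex.conjCLE.differentiable
  unfold eval Finsupp.sum
  fun_prop

theorem eval_eq_of_eqOn (hc : ∀ p ∈ c.support, suppPt p ∈ coordPlane I) {z w : Fin n → ℂ}
    (hzw : ∀ i ∈ I, z i = w i) : eval c z = eval c w := by
  refine Finsupp.sum_congr fun p hp => ?_
  have hpI := suppPt_mem_coordPlane.1 (hc p hp)
  have hfactor : ∀ i, z i ^ p.1 i = w i ^ p.1 i ∧
      starRingEnd ℂ (z i) ^ p.2 i = starRingEnd ℂ (w i) ^ p.2 i := fun i => by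
    by_cases hi : i ∈ I
    · simp [hzw i hi]
    · simp [hpI i hi]
  rw [Finset.prod_congr rfl fun i _ => (hfactor i).1,
    Finset.prod_congr rfl fun i _ => (hfactor i).2]

theorem surjective_fderiv_eval_coordSubspace (hc : ∀ p ∈ c.support, suppPt p ∈ coordPlane I)
    (v : Fin n → ℂ) (hv : Function.Surjective (fderiv ℝ (eval c) v)) :
    Function.Surjective (fderiv ℝ (fun w : coordSubspace I => eval c w) (coordProj I v)) := by
  have hfactor : eval c = (fun w : coordSubspace I => eval c w) ∘ coordProj I :=
    funext fun u => eval_eq_of_eqOn hc fun i hi => by simp [coordProj_apply, hi]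
  rw [hfactor] at hv
  exact surjective_fderiv_of_surjective_fderiv_comp
    ((differentiable_eval c).comp (coordSubspace I).subtypeL.differentiable _) hv

theorem zero_mem_Gamma0 (c : MixedCoeff n) : (0 : Fin n → ℝ) ∈ Gamma0 c :=
  subset_convexHull ℝ _ (Set.mem_insert _ _)

theorem insert_zero_suppPts_subset_Ici (c : MixedCoeff n) :
    insert 0 (suppPts c) ⊆ Set.Ici 0 :=
  Set.insert_subset Set.self_mem_Ici (suppPts_subset_Ici c)

theorem Gamma0_subset_Ici (c : MixedCoeff n) : Gamma0 c ⊆ Set.Ici 0 :=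
  convexHull_min (insert_zero_suppPts_subset_Ici c) (convex_Ici 0)

theorem Gamma0_restrict (I : Finset (Fin n)) (c : MixedCoeff n) :
    Gamma0 (restrict I c) = Gamma0 c ∩ coordPlane I := by
  refine subset_antisymm (convexHull_min ?_ ((convex_convexHull ℝ _).inter (convex_coordPlane I)))
    fun x ⟨hx, hxI⟩ => ?_
  · rw [suppPts_restrict]
    rintro x (rfl | ⟨hx, hxI⟩)
    · exact ⟨zero_mem_Gamma0 c, fun _ _ => rfl⟩
    · exact ⟨subset_convexHull ℝ _ (Set.mem_insert_of_mem _ hx), hxI⟩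
  · have hS : ∀ s ∈ insert 0 (suppPts c), 0 ≤ dotProductBilin ℝ ℝ (complIndicator I) s :=
      fun s hs => by
        rw [dotProductBilin_apply_apply, complIndicator_dotProduct]
        exact Finset.sum_nonneg fun j _ => insert_zero_suppPts_subset_Ici c hs j
    refine convexHull_mono ?_ (mem_convexHull_sep_eq_of_le hS hx
      (complIndicator_dotProduct_of_mem hxI).le)
    rintro s ⟨hs, hσs⟩
    rw [suppPts_restrict]
    rcases hs with rfl | hs
    · exact Set.mem_insert _ _
    · exact Set.mem_insert_of_mem _
        ⟨hs, (mem_coordPlane_iff_of_nonneg (suppPts_subset_Ici c hs)).2 hσs⟩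

theorem Gamma0_restrict_subset (I : Finset (Fin n)) (c : MixedCoeff n) :
    Gamma0 (restrict I c) ⊆ Gamma0 c :=
  (Gamma0_restrict I c).trans_subset Set.inter_subset_left

theorem Gamma0_restrict_subset_coordPlane (I : Finset (Fin n)) (c : MixedCoeff n) :
    Gamma0 (restrict I c) ⊆ coordPlane I :=
  (Gamma0_restrict I c).trans_subset Set.inter_subset_right

theorem exists_tilt (c : MixedCoeff n) (I : Finset (Fin n)) (a : Fin n → ℝ) (m : ℝ) :
    ∃ a' : Fin n → ℝ, (∀ x ∈ coordPlane I, a' ⬝ᵥ x = a ⬝ᵥ x) ∧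
      ∀ s ∈ suppPts c, s ∉ coordPlane I → m < a' ⬝ᵥ s := by
  obtain ⟨B, hB⟩ := ((c.support.finite_toSet.image suppPt).image (a ⬝ᵥ ·)).bddBelow
  set M := |m - B| + 1
  refine ⟨a + M • complIndicator I, fun x hx => ?_, ?_⟩
  · rw [add_dotProduct, smul_dotProduct, complIndicator_dotProduct_of_mem hx, smul_zero, add_zero]
  · rintro _ ⟨p, hp, rfl⟩ hs
    obtain ⟨j, hj, h1⟩ := one_le_suppPt_of_notMem_coordPlane hs
    have hσ : 1 ≤ complIndicator I ⬝ᵥ suppPt p := by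
      rw [complIndicator_dotProduct]
      exact h1.trans (Finset.single_le_sum (fun i _ => suppPts_subset_Ici c ⟨p, hp, rfl⟩ i)
        (Finset.mem_compl.2 hj))
    have hBp : B ≤ a ⬝ᵥ suppPt p := hB ⟨_, ⟨p, hp, rfl⟩, rfl⟩
    have hM : M ≤ M * (complIndicator I ⬝ᵥ suppPt p) := le_mul_of_one_le_right (by positivity) hσ
    rw [add_dotProduct, smul_dotProduct, smul_eq_mul]
    linarith [le_abs_self (m - B)]

theorem isGammaPlusFace_iff {Δ : Set (Fin n → ℝ)} : IsGammaPlusFace c Δ ↔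
    ∃ a : Fin n → ℝ, Δ = minimizers (a ⬝ᵥ ·) (Gamma0 c) ∧ Δ.Nonempty ∧ 0 ∉ Δ := by
  constructor
  · rintro ⟨⟨hne, rfl | ⟨a, rfl⟩⟩, h0⟩
    · exact absurd (zero_mem_Gamma0 c) h0
    · exact ⟨a, rfl, hne, h0⟩
  · rintro ⟨a, rfl, hne, h0⟩
    exact ⟨⟨hne, Or.inr ⟨a, rfl⟩⟩, h0⟩

theorem IsGammaPlusFace.subset_Gamma0 {Δ : Set (Fin n → ℝ)} (h : IsGammaPlusFace c Δ) :
    Δ ⊆ Gamma0 c := by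
  obtain ⟨a, rfl, -⟩ := isGammaPlusFace_iff.1 h
  exact Set.sep_subset _ _

theorem IsGammaPlusFace.of_restrict {Δ : Set (Fin n → ℝ)}
    (h : IsGammaPlusFace (restrict I c) Δ) : IsGammaPlusFace c Δ := by
  obtain ⟨a, rfl, ⟨x₀, hx₀, hx₀min⟩, h0⟩ := isGammaPlusFace_iff.1 h
  have hm : a ⬝ᵥ x₀ < 0 := by
    simpa using hx₀min.lt_of_notMem_minimizers (zero_mem_Gamma0 _) h0
  obtain ⟨a', ha', ha'_out⟩ := exists_tilt c I a (a ⬝ᵥ x₀)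
  have hx₀a' : a' ⬝ᵥ x₀ = a ⬝ᵥ x₀ := ha' x₀ (Gamma0_restrict_subset_coordPlane I c hx₀)
  have hS : ∀ s ∈ insert 0 (suppPts c), a' ⬝ᵥ x₀ ≤ dotProductBilin ℝ ℝ a' s := by
    rintro s (rfl | hs)
    · simpa [hx₀a'] using hm.le
    by_cases hsI : s ∈ coordPlane I
    · have hsCI : s ∈ Gamma0 (restrict I c) := subset_convexHull ℝ _
        (Set.mem_insert_of_mem _ ((suppPts_restrict I c).symm ▸ ⟨hs, hsI⟩))
      simpa [hx₀a', ha' s hsI] using hx₀min hsCI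
    · simpa [hx₀a'] using (ha'_out s hs hsI).le
  have hlevel : {s ∈ insert 0 (suppPts c) | dotProductBilin ℝ ℝ a' s = a' ⬝ᵥ x₀} ⊆
      insert 0 (suppPts (restrict I c)) := by
    rintro s ⟨rfl | hs, hs_eq⟩
    · exact Set.mem_insert _ _
    by_cases hsI : s ∈ coordPlane I
    · exact Set.mem_insert_of_mem _ ((suppPts_restrict I c).symm ▸ ⟨hs, hsI⟩)
    · simp only [dotProductBilin_apply_apply, hx₀a'] at hs_eq
      exact absurd hs_eq (ha'_out s hs hsI).ne'
  have hx₀C : IsMinOn (a' ⬝ᵥ ·) (Gamma0 c) x₀ := fun y hy =>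
    convexHull_min hS (convex_halfSpace_ge (dotProductBilin ℝ ℝ a').isLinear _) hy
  have hface : minimizers (a ⬝ᵥ ·) (Gamma0 (restrict I c)) = minimizers (a' ⬝ᵥ ·) (Gamma0 c) := by
    rw [minimizers_congr fun x hx => (ha' x (Gamma0_restrict_subset_coordPlane I c hx)).symm]
    refine minimizers_eq_of_subset (Gamma0_restrict_subset I c) hx₀ hx₀C fun y hy => ?_
    exact convexHull_mono hlevel
      (mem_convexHull_sep_eq_of_le hS hy.1 (hy.2 (Gamma0_restrict_subset I c hx₀)))
  rw [hface] at h0 ⊢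
  exact isGammaPlusFace_iff.2 ⟨a', rfl, ⟨x₀, Gamma0_restrict_subset I c hx₀, hx₀C⟩, h0⟩

theorem GammaPlusSet_restrict (I : Finset (Fin n)) (c : MixedCoeff n) :
    GammaPlusSet (restrict I c) = GammaPlusSet c ∩ (coordPlane I ∩ Set.Ici 0) := by
  ext x
  constructor
  · rintro ⟨Δ, hΔ, hx⟩
    have hxC : x ∈ Gamma0 c ∩ coordPlane I := Gamma0_restrict I c ▸ hΔ.subset_Gamma0 hx
    exact ⟨⟨Δ, hΔ.of_restrict, hx⟩, hxC.2, Gamma0_subset_Ici c hxC.1⟩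
  · rintro ⟨⟨Δ, hΔ, hxΔ⟩, hxI, -⟩
    obtain ⟨a, rfl, -, h0⟩ := isGammaPlusFace_iff.1 hΔ
    have hxCI : x ∈ Gamma0 (restrict I c) := (Gamma0_restrict I c).symm ▸ ⟨hxΔ.1, hxI⟩
    have hxmin : x ∈ minimizers (a ⬝ᵥ ·) (Gamma0 (restrict I c)) :=
      ⟨hxCI, hxΔ.2.on_subset (Gamma0_restrict_subset I c)⟩
    have hsub := minimizers_subset_of_subset (Gamma0_restrict_subset I c) hxCI hxΔ
    exact ⟨_, isGammaPlusFace_iff.2 ⟨a, rfl, ⟨x, hxmin⟩, fun h => h0 (hsub h)⟩, hxmin⟩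

theorem NewtonNonDeg.restrict (hc : NewtonNonDeg c) (I : Finset (Fin n)) :
    NewtonNonDegOn I (restrict I c) := by
  intro Δ hΔ z hz hz0
  have hΔI : Δ ⊆ coordPlane I := hΔ.subset_Gamma0.trans (Gamma0_restrict_subset_coordPlane I c)
  rw [trunc_restrict hΔI] at hz0 ⊢
  have hsupp : ∀ p ∈ (trunc c Δ).support, suppPt p ∈ coordPlane I := fun p hp =>
    hΔI (suppPt_mem_of_mem_support_trunc hp)
  -- extend `z` by `1` outside `I` to land in the torus `(ℂ*)ⁿ`
  let zt : Fin n → ℂ := fun i => if i ∈ I then (z : Fin n → ℂ) i else 1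
  have hzt_ne : ∀ i, zt i ≠ 0 := fun i => by
    by_cases hi : i ∈ I
    · simpa [zt, hi] using hz i hi
    · simp [zt, hi]
  have hzt0 : eval (trunc c Δ) zt = 0 := (eval_eq_of_eqOn hsupp fun i hi => if_pos hi).trans hz0
  have hproj : coordProj I zt = z := Subtype.ext <| funext fun i => by
    by_cases hi : i ∈ I
    · simp [coordProj_apply, zt, hi]
    · simp [coordProj_apply, hi, mem_coordSubspace.1 z.2 i hi]
  rw [← hproj]
  exact surjective_fderiv_eval_coordSubspace hsupp zt
    (not_not.1 (hc Δ hΔ.of_restrict zt hzt_ne hzt0))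

end Mixed

theorem newton_nondeg_restriction_general {n : ℕ} (c : MixedCoeff n) (hnd : Mixed.NewtonNonDeg c)
    (I : Finset (Fin n)) (cI : MixedCoeff n)
    (hcI : cI = @Finsupp.filter _ _ _ (fun p => ∀ j ∉ I, p.1 j = 0 ∧ p.2 j = 0)
      (Classical.decPred _) c) :
    (∀ Δ, Mixed.IsGammaPlusFace cI Δ →
      ∀ z : coordSubspace I, (∀ i ∈ I, (z : Fin n → ℂ) i ≠ 0) →
        Mixed.eval (Mixed.trunc cI Δ) (z : Fin n → ℂ) = 0 →
        Function.Surjective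
          ⇑(fderiv ℝ (fun w : coordSubspace I => Mixed.eval (Mixed.trunc cI Δ) (w : Fin n → ℂ)) z)) ∧
    Mixed.GammaPlusSet cI = Mixed.GammaPlusSet c ∩
      {x : Fin n → ℝ | (∀ j ∉ I, x j = 0) ∧ ∀ i, 0 ≤ x i} := by
  obtain rfl : cI = Mixed.restrict I c := hcI
  exact ⟨hnd.restrict I, Mixed.GammaPlusSet_restrict I c⟩

theorem newton_nondeg_restriction {n : ℕ} (c : MixedCoeff n) (hnd : Mixed.NewtonNonDeg c)
    (I : Finset (Fin n)) (hI : I.Nonempty) (cI : MixedCoeff n)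
    (hcI : cI = @Finsupp.filter _ _ _ (fun p => ∀ j ∉ I, p.1 j = 0 ∧ p.2 j = 0)
      (Classical.decPred _) c)
    (hnz : ∃ z : Fin n → ℂ, (∀ j ∉ I, z j = 0) ∧ Mixed.eval c z ≠ 0) :
    (∀ Δ, Mixed.IsGammaPlusFace cI Δ →
      ∀ z : coordSubspace I, (∀ i ∈ I, (z : Fin n → ℂ) i ≠ 0) →
        Mixed.eval (Mixed.trunc cI Δ) (z : Fin n → ℂ) = 0 →
        Function.Surjective
          ⇑(fderiv ℝ (fun w : coordSubspace I => Mixed.eval (Mixed.trunc cI Δ) (w : Fin n → ℂ)) z)) ∧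
    Mixed.GammaPlusSet cI = Mixed.GammaPlusSet c ∩
      {x : Fin n → ℝ | (∀ j ∉ I, x j = 0) ∧ ∀ i, 0 ≤ x i} :=
  newton_nondeg_restriction_general c hnd I cI hcI
end
end
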